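/- arXiv:2401.10527 — 7 statements merged into one kernel-verified Lean document; each statement's English description precedes it below -/
import Mathlib

section
/- Let L be a field, U : ℕ×ℕ → L an array, l ∈ ℕ×ℕ, and let f, g ∈ L[X₁,X₂] be nonzero polynomials with s_f = LP(f) and s_g = LP(g). If s_f <_T s_g and n ∈ ℕ×ℕ satisfies s_g ⪯ n and n <_T l, then s_f ⪯ n − s_g + s_f, n − s_g + s_f <_T l, and (f+g)[U]_n = f[U]_{n − s_g + s_f} + g[U]_n. -/
/-- A monomial order on `ℕ × ℕ`: a linear well-order compatible with addition that
refines the componentwise partial order. -/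
structure MonomialOrder2 where
  le : ℕ × ℕ → ℕ × ℕ → Prop
  le_refl : ∀ a, le a a
  le_trans : ∀ a b c, le a b → le b c → le a c
  le_antisymm : ∀ a b, le a b → le b a → a = b
  le_total : ∀ a b, le a b ∨ le b a
  wf : WellFounded (fun a b : ℕ × ℕ => le a b ∧ a ≠ b)
  add_right : ∀ a b k, le a b → le (a + k) (b + k)
  refines : ∀ a b : ℕ × ℕ, a.1 ≤ b.1 → a.2 ≤ b.2 → le a b

/-- Strict version of the monomial order. -/
def MonomialOrder2.lt (T : MonomialOrder2) (a b : ℕ × ℕ) : Prop :=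
  T.le a b ∧ a ≠ b

section Defs

variable {L : Type*} [Field L]

/-- `IsLP T f s` says `s` is the leading power product exponent of `f` w.r.t. `T`. -/
def IsLP (T : MonomialOrder2) (f : AddMonoidAlgebra L (ℕ × ℕ)) (s : ℕ × ℕ) : Prop :=
  s ∈ f.coeff.support ∧ ∀ m ∈ f.coeff.support, T.le m s

/-- `recEval U f s n` is `f[U]_n`, where `s` is the leading power product exponent of `f`. -/
noncomputable def recEval (U : ℕ × ℕ → L) (f : AddMonoidAlgebra L (ℕ × ℕ))
    (s n : ℕ × ℕ) : L :=
  if s.1 ≤ n.1 ∧ s.2 ≤ n.2 then ∑ m ∈ f.coeff.support, f.coeff m * U (m + n - s) else 0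

/-- `Lambda T U l` is `Λ(u^l)`, the set of nonzero polynomials valid at all
`n` with `LP f ⪯ n` and `n <_T l`. -/
def Lambda (T : MonomialOrder2) (U : ℕ × ℕ → L) (l : ℕ × ℕ) :
    Set (AddMonoidAlgebra L (ℕ × ℕ)) :=
  { f | f ≠ 0 ∧ ∀ s n : ℕ × ℕ, IsLP T f s → s.1 ≤ n.1 → s.2 ≤ n.2 → T.lt n l →
      recEval U f s n = 0 }

/-- `𝔏(U)`: nonzero polynomials generating the whole array `U`. -/
def LambdaU (T : MonomialOrder2) (U : ℕ × ℕ → L) :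
    Set (AddMonoidAlgebra L (ℕ × ℕ)) :=
  { f | f ≠ 0 ∧ ∀ (s n : ℕ × ℕ), IsLP T f s → recEval U f s n = 0 }

/-- The footprint `Δ(U)` of the ideal of linear recurring relations of `U`. -/
def footprint (T : MonomialOrder2) (U : ℕ × ℕ → L) : Set (ℕ × ℕ) :=
  { n | ∀ f s, f ∈ LambdaU T U → IsLP T f s → ¬(s.1 ≤ n.1 ∧ s.2 ≤ n.2) }

/-- A doubly periodic array of period `r₁ × r₂`. -/
def DoublyPeriodic (r₁ r₂ : ℕ) (U : ℕ × ℕ → L) : Prop :=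
  ∀ n m : ℕ × ℕ, n.1 % r₁ = m.1 % r₁ → n.2 % r₂ = m.2 % r₂ → U n = U m

/-- Evaluation of a bivariate polynomial with coefficients in `L` at `(x, y)`. -/
noncomputable def evalAtL (f : AddMonoidAlgebra L (ℕ × ℕ)) (x y : L) : L :=
  ∑ m ∈ f.coeff.support, f.coeff m * x ^ m.1 * y ^ m.2

end Defs

/-- Evaluation of a bivariate polynomial with coefficients in `F` at a point of `L`. -/
noncomputable def evalAt {F L : Type*} [Field F] [Field L] [Algebra F L]
    (e : AddMonoidAlgebra F (ℕ × ℕ)) (x y : L) : L :=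
  ∑ s ∈ e.coeff.support, algebraMap F L (e.coeff s) * x ^ s.1 * y ^ s.2

/-- The index box `I = {0,…,r₁−1} × {0,…,r₂−1}`. -/
def Ibox (r₁ r₂ : ℕ) : Set (ℕ × ℕ) := { p | p.1 < r₁ ∧ p.2 < r₂ }

/-- `s^(1),…,s^(d)` (0-indexed: `s 0, …, s (d-1)`) is a sequence of defining points. -/
def IsDefPoints (d : ℕ) (s : ℕ → ℕ × ℕ) : Prop :=
  0 < d ∧ (∀ i j, i < j → j < d → (s j).1 < (s i).1) ∧
    (∀ i j, i < j → j < d → (s i).2 < (s j).2) ∧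
    (s (d - 1)).1 = 0 ∧ (s 0).2 = 0

/-- The delta-set of a sequence of defining points. -/
def deltaSet (d : ℕ) (s : ℕ → ℕ × ℕ) : Set (ℕ × ℕ) :=
  { m | ∃ i, i + 1 < d ∧ m.1 + 1 ≤ (s i).1 ∧ m.2 + 1 ≤ (s (i + 1)).2 }

/-- `IsMinimalSet T U l d s f`: `{f 0, …, f (d-1)}` is a minimal set of polynomials
for `u^l`, with defining points `s 0, …, s (d-1)`. -/
def IsMinimalSet {L : Type*} [Field L] (T : MonomialOrder2) (U : ℕ × ℕ → L) (l : ℕ × ℕ)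
    (d : ℕ) (s : ℕ → ℕ × ℕ) (f : ℕ → AddMonoidAlgebra L (ℕ × ℕ)) : Prop :=
  IsDefPoints d s ∧
    (∀ i, i < d → f i ∈ Lambda T U l ∧ IsLP T (f i) (s i)) ∧
    (∀ g sg, IsLP T g sg → sg ∈ deltaSet d s → g ∉ Lambda T U l)

/-- The set of indexes `𝒮(t)`. -/
def Sset (t : ℕ) : Set (ℕ × ℕ) :=
  { p | (p.1 = 0 ∧ p.2 ≤ 2 * t - 1) ∨ (p.2 = 0 ∧ p.1 ≤ 2 * t - 1) ∨
      (1 ≤ p.1 ∧ 1 ≤ p.2 ∧ p.1 + p.2 ≤ t) }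

/-! Since `f[U]_n` only depends on `n - LP f`, shifting `n` by `LP f - LP g` turns the
`f`-part of `(f+g)[U]_n` into `f[U]_{n - LP g + LP f}`; strict compatibility of `<_T` with
addition gives `n - LP g + LP f <_T n <_T l`. -/

namespace MonomialOrder2

variable (T : MonomialOrder2)

theorem lt_trans {a b c : ℕ × ℕ} (hab : T.lt a b) (hbc : T.lt b c) : T.lt a c :=
  ⟨T.le_trans a b c hab.1 hbc.1, fun hac =>
    hab.2 (T.le_antisymm a b hab.1 (hac ▸ hbc.1))⟩

theorem add_lt_add_right {a b : ℕ × ℕ} (hab : T.lt a b) (k : ℕ × ℕ) : T.lt (a + k) (b + k) :=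
  ⟨T.add_right a b k hab.1, fun h => hab.2 (add_right_cancel h)⟩

theorem sub_add_lt {s t n : ℕ × ℕ} (hst : T.lt s t) (htn : t ≤ n) : T.lt (n - t + s) n := by
  simpa only [add_comm _ (n - t), tsub_add_cancel_of_le htn] using T.add_lt_add_right hst (n - t)

end MonomialOrder2

section RecEval

variable {L : Type*} [Field L] (U : ℕ × ℕ → L)

theorem recEval_add (f g : AddMonoidAlgebra L (ℕ × ℕ)) (s n : ℕ × ℕ) :
    recEval U (f + g) s n = recEval U f s n + recEval U g s n := by
  unfold recEval
  split_ifs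
  · simp only [AddMonoidAlgebra.coeff_add]
    exact Finsupp.sum_add_index' (h := fun m c => c * U (m + n - s))
      (fun _ => zero_mul _) (fun _ _ _ => add_mul _ _ _)
  · rw [add_zero]

theorem recEval_sub_add {s n : ℕ × ℕ} (f : AddMonoidAlgebra L (ℕ × ℕ)) (hsn : s ≤ n)
    (t : ℕ × ℕ) : recEval U f t (n - s + t) = recEval U f s n := by
  have htn : t ≤ n - s + t := le_add_self
  unfold recEval
  rw [if_pos (Prod.le_def.mp htn), if_pos (Prod.le_def.mp hsn)]
  refine Finset.sum_congr rfl fun m _ => ?_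
  rw [← add_assoc, add_tsub_cancel_right, add_tsub_assoc_of_le hsn]

end RecEval

theorem stmt_0_general (T : MonomialOrder2) {L : Type*} [Field L] (U : ℕ × ℕ → L) (l : ℕ × ℕ)
    (f g : AddMonoidAlgebra L (ℕ × ℕ))
    (sf sg : ℕ × ℕ) (hlt : T.lt sf sg)
    (n : ℕ × ℕ) (hn1 : sg.1 ≤ n.1) (hn2 : sg.2 ≤ n.2) (hnl : T.lt n l) :
    sf.1 ≤ (n - sg + sf).1 ∧ sf.2 ≤ (n - sg + sf).2 ∧ T.lt (n - sg + sf) l ∧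
      recEval U (f + g) sg n = recEval U f sf (n - sg + sf) + recEval U g sg n := by
  have hsgn : sg ≤ n := Prod.le_def.mpr ⟨hn1, hn2⟩
  refine ⟨Nat.le_add_left _ _, Nat.le_add_left _ _, T.lt_trans (T.sub_add_lt hlt hsgn) hnl, ?_⟩
  rw [recEval_add, recEval_sub_add U f hsgn]

/-- if `LP f <_T LP g`, `LP g ⪯ n` and `n <_T l`, then
`LP f ⪯ n − LP g + LP f`, `n − LP g + LP f <_T l`, and
`(f+g)[U]_n = f[U]_{n − LP g + LP f} + g[U]_n`. -/
theorem stmt_0 (T : MonomialOrder2) {L : Type*} [Field L] (U : ℕ × ℕ → L) (l : ℕ × ℕ)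
    (f g : AddMonoidAlgebra L (ℕ × ℕ)) (hf : f ≠ 0) (hg : g ≠ 0)
    (sf sg : ℕ × ℕ) (hsf : IsLP T f sf) (hsg : IsLP T g sg) (hlt : T.lt sf sg)
    (n : ℕ × ℕ) (hn1 : sg.1 ≤ n.1) (hn2 : sg.2 ≤ n.2) (hnl : T.lt n l) :
    sf.1 ≤ (n - sg + sf).1 ∧ sf.2 ≤ (n - sg + sf).2 ∧ T.lt (n - sg + sf) l ∧
      recEval U (f + g) sg n = recEval U f sf (n - sg + sf) + recEval U g sg n :=
  stmt_0_general T U l f g sf sg hlt n hn1 hn2 hnl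
end

section
/- Let L be a field, U : ℕ×ℕ → L an array, and l, t ∈ ℕ×ℕ. If f, g ∈ L[X₁,X₂] are nonzero polynomials with f ∈ Λ(u^l), g ∈ Λ(u^l), and LP(f) + t ≠ LP(g), then X₁^{t₁}X₂^{t₂}·f + g ∈ Λ(u^l). -/
/-!
Write `f[U]_n = Σ_m f_m U(m + (n - LP f))`. The inner sum, as a function of the offset
`k = n - LP f`, is additive in `f`, and multiplying `f` by `X^t` just shifts the offset by `t`.
So `f ∈ Λ(u^l)` says that this sum vanishes for every offset `k` with `LP f + k <_T l`.
If `LP f + t ≠ LP g`, the leading term of `X^t f + g` is the `≤_T`-larger of `LP f + t` and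
`LP g`; compatibility of `≤_T` with addition then puts every offset needed for `X^t f + g`
in the range covered by the hypotheses on `f` and `g`.
-/

open AddMonoidAlgebra

namespace MonomialOrder2

variable (T : MonomialOrder2)

lemma lt_of_le_of_lt {a b c : ℕ × ℕ} (hab : T.le a b) (hbc : T.lt b c) : T.lt a c :=
  ⟨T.le_trans _ _ _ hab hbc.1, fun h => hbc.2 (T.le_antisymm _ _ hbc.1 (h ▸ hab))⟩

lemma add_left {a b : ℕ × ℕ} (k : ℕ × ℕ) (h : T.le a b) : T.le (k + a) (k + b) := by
  simpa only [add_comm k] using T.add_right a b k h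

end MonomialOrder2

section

variable {L : Type*} [Field L]

lemma coeff_single_one_mul (t : ℕ × ℕ) (f : AddMonoidAlgebra L (ℕ × ℕ)) :
    (single t (1 : L) * f).coeff = Finsupp.mapDomain (t + ·) f.coeff := by
  ext m
  by_cases htm : t ≤ m
  · obtain ⟨k, rfl⟩ := exists_add_of_le htm
    rw [coeff_single_mul_add, one_mul, Finsupp.mapDomain_apply (add_right_injective t)]
  · rw [coeff_single_mul_of_forall_add_ne _ _ fun k (hk : t + k = m) => htm (hk ▸ le_self_add),
      Finsupp.mapDomain_of_notMem_range]
    rintro ⟨k, rfl⟩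
    exact htm le_self_add

namespace IsLP

variable {T : MonomialOrder2} {f g : AddMonoidAlgebra L (ℕ × ℕ)} {s s' : ℕ × ℕ}

lemma unique (h : IsLP T f s) (h' : IsLP T f s') : s = s' :=
  T.le_antisymm _ _ (h'.2 _ h.1) (h.2 _ h'.1)

lemma ne_zero (h : IsLP T f s) : f ≠ 0 := by
  rintro rfl
  simpa using h.1

lemma single_one_mul (h : IsLP T f s) (t : ℕ × ℕ) :
    IsLP T (single t (1 : L) * f) (t + s) := by
  refine ⟨by simpa [coeff_single_mul_add] using h.1, fun m hm => ?_⟩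
  rw [coeff_single_one_mul, Finsupp.mapDomain_support_of_injective (add_right_injective t),
    Finset.mem_image] at hm
  obtain ⟨m', hm', rfl⟩ := hm
  exact T.add_left t (h.2 m' hm')

lemma add_of_lt (hf : IsLP T f s) (hg : IsLP T g s') (hlt : T.lt s' s) :
    IsLP T (f + g) s := by
  have hgs : g.coeff s = 0 := by
    by_contra hne
    exact hlt.2 (T.le_antisymm _ _ hlt.1 (hg.2 s (Finsupp.mem_support_iff.mpr hne)))
  refine ⟨by simpa [coeff_add, hgs] using hf.1, fun m hm => ?_⟩
  rcases Finset.mem_union.mp (Finsupp.support_add hm) with hm | hm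
  · exact hf.2 m hm
  · exact T.le_trans _ _ _ (hg.2 m hm) hlt.1

lemma exists_add (hf : IsLP T f s) (hg : IsLP T g s') (hne : s ≠ s') :
    ∃ c, IsLP T (f + g) c ∧ T.le s c ∧ T.le s' c := by
  rcases T.le_total s' s with h | h
  · exact ⟨s, hf.add_of_lt hg ⟨h, hne.symm⟩, T.le_refl s, h⟩
  · exact ⟨s', add_comm g f ▸ hg.add_of_lt hf ⟨h, hne⟩, h, T.le_refl s'⟩

end IsLP

/-- `offsetEval U f k = Σ_m f_m U(m + k)`, so that `f[U]_n = offsetEval U f (n - LP f)`. -/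
noncomputable def offsetEval (U : ℕ × ℕ → L) (f : AddMonoidAlgebra L (ℕ × ℕ)) (k : ℕ × ℕ) : L :=
  Finsupp.linearCombination L (fun m => U (m + k)) f.coeff

variable {T : MonomialOrder2} {U : ℕ × ℕ → L} {f g : AddMonoidAlgebra L (ℕ × ℕ)}
  {s s' l : ℕ × ℕ}

lemma offsetEval_add (k : ℕ × ℕ) :
    offsetEval U (f + g) k = offsetEval U f k + offsetEval U g k :=
  map_add _ _ _

lemma offsetEval_single_one_mul (t k : ℕ × ℕ) :
    offsetEval U (single t (1 : L) * f) k = offsetEval U f (t + k) := by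
  rw [offsetEval, coeff_single_one_mul, Finsupp.linearCombination_mapDomain, offsetEval]
  congr 2
  funext m
  rw [Function.comp_apply, add_assoc, add_left_comm]

lemma recEval_eq_offsetEval {n : ℕ × ℕ} (h : s ≤ n) :
    recEval U f s n = offsetEval U f (n - s) := by
  rw [recEval, if_pos (Prod.le_def.mp h), offsetEval, Finsupp.linearCombination_apply, Finsupp.sum]
  refine Finset.sum_congr rfl fun m _ => ?_
  rw [smul_eq_mul, add_tsub_assoc_of_le h]

lemma mem_Lambda_iff (hs : IsLP T f s) :
    f ∈ Lambda T U l ↔ ∀ k, T.lt (s + k) l → offsetEval U f k = 0 := by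
  refine ⟨fun hf k hk => ?_, fun hf => ⟨hs.ne_zero, fun s' n hs' h₁ h₂ hn => ?_⟩⟩
  · have hle : s ≤ s + k := le_self_add
    simpa [recEval_eq_offsetEval hle] using hf.2 s (s + k) hs hle.1 hle.2 hk
  · obtain rfl := hs.unique hs'
    have hle : s ≤ n := Prod.le_def.mpr ⟨h₁, h₂⟩
    rw [recEval_eq_offsetEval hle]
    exact hf _ (by rwa [add_tsub_cancel_of_le hle])

lemma single_one_mul_mem_Lambda (hs : IsLP T f s) (hf : f ∈ Lambda T U l) (t : ℕ × ℕ) :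
    single t (1 : L) * f ∈ Lambda T U l := by
  rw [mem_Lambda_iff hs] at hf
  rw [mem_Lambda_iff (hs.single_one_mul t)]
  intro k hk
  rw [offsetEval_single_one_mul]
  exact hf (t + k) (by rwa [← add_assoc, add_comm s])

lemma add_mem_Lambda (hf : IsLP T f s) (hg : IsLP T g s') (hne : s ≠ s')
    (hfΛ : f ∈ Lambda T U l) (hgΛ : g ∈ Lambda T U l) : f + g ∈ Lambda T U l := by
  obtain ⟨c, hc, hsc, hs'c⟩ := hf.exists_add hg hne
  rw [mem_Lambda_iff hf] at hfΛ
  rw [mem_Lambda_iff hg] at hgΛ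
  rw [mem_Lambda_iff hc]
  intro k hk
  rw [offsetEval_add, hfΛ k (T.lt_of_le_of_lt (T.add_right _ _ k hsc) hk),
    hgΛ k (T.lt_of_le_of_lt (T.add_right _ _ k hs'c) hk), add_zero]

end

theorem stmt_2_general (T : MonomialOrder2) {L : Type*} [Field L] (U : ℕ × ℕ → L) (l t : ℕ × ℕ)
    (f g : AddMonoidAlgebra L (ℕ × ℕ))
    (hf : f ∈ Lambda T U l) (hg : g ∈ Lambda T U l)
    (sf sg : ℕ × ℕ) (hsf : IsLP T f sf) (hsg : IsLP T g sg) (hne : sf + t ≠ sg) :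
    AddMonoidAlgebra.single t (1 : L) * f + g ∈ Lambda T U l :=
  add_mem_Lambda (hsf.single_one_mul t) hsg (by rwa [add_comm t])
    (single_one_mul_mem_Lambda hsf hf t) hg

/-- if `f, g ∈ Λ(u^l)` and `LP f + t ≠ LP g`, then
`X₁^{t₁}X₂^{t₂}·f + g ∈ Λ(u^l)`. -/
theorem stmt_2 (T : MonomialOrder2) {L : Type*} [Field L] (U : ℕ × ℕ → L) (l t : ℕ × ℕ)
    (f g : AddMonoidAlgebra L (ℕ × ℕ)) (hf0 : f ≠ 0) (hg0 : g ≠ 0)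
    (hf : f ∈ Lambda T U l) (hg : g ∈ Lambda T U l)
    (sf sg : ℕ × ℕ) (hsf : IsLP T f sf) (hsg : IsLP T g sg) (hne : sf + t ≠ sg) :
    AddMonoidAlgebra.single t (1 : L) * f + g ∈ Lambda T U l :=
  stmt_2_general T U l t f g hf hg sf sg hsf hsg hne
end

section
/- (Sakata–Massey Theorem) Let L be a field, U : ℕ×ℕ → L an array, and l ∈ ℕ×ℕ. Let f ∈ L[X₁,X₂] be a nonzero polynomial with LP(f) = s such that f ∈ Λ(u^l) but f[U]_l ≠ 0 (in particular s ⪯ l). If g ∈ L[X₁,X₂] is a nonzero polynomial with LP(g) = l − s and g ∈ Λ(u^l), then g[U]_l ≠ 0. -/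
theorem MonomialOrder2.lt_add_right (T : MonomialOrder2) {a b : ℕ × ℕ} (h : T.lt a b)
    (k : ℕ × ℕ) : T.lt (a + k) (b + k) :=
  ⟨T.add_right a b k h.1, fun e => h.2 (add_right_cancel e)⟩

section SakataMassey

variable {L : Type*} [Field L] {T : MonomialOrder2} {U : ℕ × ℕ → L}

theorem IsLP.lt_of_ne {f : AddMonoidAlgebra L (ℕ × ℕ)} {s m : ℕ × ℕ} (hs : IsLP T f s)
    (hm : m ∈ f.coeff.support) (hne : m ≠ s) : T.lt m s :=
  ⟨hs.2 m hm, hne⟩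

theorem le_of_recEval_ne_zero {f : AddMonoidAlgebra L (ℕ × ℕ)} {s n : ℕ × ℕ}
    (h : recEval U f s n ≠ 0) : s ≤ n := by
  by_contra hsn
  exact h (if_neg (Prod.le_def.not.mp hsn))

theorem recEval_add_self (f : AddMonoidAlgebra L (ℕ × ℕ)) (s k : ℕ × ℕ) :
    recEval U f s (k + s) = ∑ m ∈ f.coeff.support, f.coeff m * U (m + k) := by
  rw [recEval, if_pos ⟨by simp, by simp⟩]
  refine Finset.sum_congr rfl fun m _ => ?_
  rw [← add_assoc, add_tsub_cancel_right]

theorem sum_coeff_mul_recEval_comm (f g : AddMonoidAlgebra L (ℕ × ℕ)) (s t : ℕ × ℕ) :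
    ∑ m ∈ f.coeff.support, f.coeff m * recEval U g t (m + t) =
      ∑ k ∈ g.coeff.support, g.coeff k * recEval U f s (k + s) := by
  simp only [recEval_add_self, Finset.mul_sum]
  rw [Finset.sum_comm]
  refine Finset.sum_congr rfl fun k _ => Finset.sum_congr rfl fun m _ => ?_
  rw [mul_left_comm, add_comm k m]

theorem sum_coeff_mul_recEval_eq_of_mem_Lambda {f g : AddMonoidAlgebra L (ℕ × ℕ)}
    {s t l : ℕ × ℕ} (hf : f ∈ Lambda T U l) (hs : IsLP T f s) (ht : IsLP T g t)
    (hl : t + s = l) :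
    ∑ k ∈ g.coeff.support, g.coeff k * recEval U f s (k + s) = g.coeff t * recEval U f s l := by
  rw [Finset.sum_eq_single_of_mem t ht.1, hl]
  intro k hk hkt
  have hlt : T.lt (k + s) l := hl ▸ T.lt_add_right (ht.lt_of_ne hk hkt) s
  rw [hf.2 s (k + s) hs (by simp) (by simp) hlt, mul_zero]

theorem coeff_mul_recEval_eq_of_mem_Lambda {f g : AddMonoidAlgebra L (ℕ × ℕ)}
    {s t l : ℕ × ℕ} (hf : f ∈ Lambda T U l) (hg : g ∈ Lambda T U l)
    (hs : IsLP T f s) (ht : IsLP T g t) (hl : s + t = l) :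
    f.coeff s * recEval U g t l = g.coeff t * recEval U f s l := by
  rw [← sum_coeff_mul_recEval_eq_of_mem_Lambda hg ht hs hl,
    ← sum_coeff_mul_recEval_eq_of_mem_Lambda hf hs ht ((add_comm t s).trans hl),
    sum_coeff_mul_recEval_comm]

end SakataMassey

theorem stmt_4_general (T : MonomialOrder2) {L : Type*} [Field L] (U : ℕ × ℕ → L) (l : ℕ × ℕ)
    (f : AddMonoidAlgebra L (ℕ × ℕ)) (s : ℕ × ℕ) (hs : IsLP T f s)
    (hf : f ∈ Lambda T U l) (hfl : recEval U f s l ≠ 0)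
    (g : AddMonoidAlgebra L (ℕ × ℕ)) (hgs : IsLP T g (l - s))
    (hg : g ∈ Lambda T U l) :
    recEval U g (l - s) l ≠ 0 := by
  have hl : s + (l - s) = l := add_tsub_cancel_of_le (le_of_recEval_ne_zero hfl)
  have key := coeff_mul_recEval_eq_of_mem_Lambda hf hg hs hgs hl
  have hrhs : g.coeff (l - s) * recEval U f s l ≠ 0 :=
    mul_ne_zero (Finsupp.mem_support_iff.mp hgs.1) hfl
  exact right_ne_zero_of_mul (key ▸ hrhs)

/-- Sakata–Massey Theorem: if `f ∈ Λ(u^l)` with `LP f = s` and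
`f[U]_l ≠ 0`, and `g ∈ Λ(u^l)` is nonzero with `LP g = l − s`, then `g[U]_l ≠ 0`. -/
theorem stmt_4 (T : MonomialOrder2) {L : Type*} [Field L] (U : ℕ × ℕ → L) (l : ℕ × ℕ)
    (f : AddMonoidAlgebra L (ℕ × ℕ)) (hf0 : f ≠ 0) (s : ℕ × ℕ) (hs : IsLP T f s)
    (hf : f ∈ Lambda T U l) (hfl : recEval U f s l ≠ 0)
    (g : AddMonoidAlgebra L (ℕ × ℕ)) (hg0 : g ≠ 0) (hgs : IsLP T g (l - s))
    (hg : g ∈ Lambda T U l) :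
    recEval U g (l - s) l ≠ 0 :=
  stmt_4_general T U l f s hs hf hfl g hgs hg
end

section
/- Let U be the syndrome table afforded by e and τ. For every nonzero polynomial f ∈ L[X₁,X₂] with l = LP(f) and every n ∈ ℕ×ℕ with l ⪯ n, one has Σ_{k∈supp(f)} f_k · u_{k+n−l} = Σ_{s∈supp(e)} e_s · α₁^{s₁(n₁−l₁+τ₁)} · α₂^{s₂(n₂−l₂+τ₂)} · f(α₁^{s₁}, α₂^{s₂}); that is, f[U]_n = Σ_{s∈supp(e)} e_s · α̅^{s·(n−l+τ)} · f(α̅^s). -/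
open Finset

section SyndromeTable

variable {F L : Type*} [Field F] [Field L] [Algebra F L]

theorem recEval_of_le (U : ℕ × ℕ → L) (f : AddMonoidAlgebra L (ℕ × ℕ)) {l n : ℕ × ℕ}
    (h₁ : l.1 ≤ n.1) (h₂ : l.2 ≤ n.2) :
    recEval U f l n = ∑ m ∈ f.coeff.support, f.coeff m * U (m + (n - l)) := by
  rw [recEval, if_pos ⟨h₁, h₂⟩]
  refine sum_congr rfl fun m _ => ?_
  rw [add_tsub_assoc_of_le (Prod.mk_le_mk.mpr ⟨h₁, h₂⟩)]

theorem evalAt_pow_add (e : AddMonoidAlgebra F (ℕ × ℕ)) (x y : L) (k m : ℕ × ℕ) :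
    evalAt e (x ^ (k.1 + m.1)) (y ^ (k.2 + m.2)) =
      ∑ s ∈ e.coeff.support, algebraMap F L (e.coeff s) * x ^ (s.1 * k.1) * y ^ (s.2 * k.2) *
        ((x ^ s.1) ^ m.1 * (y ^ s.2) ^ m.2) := by
  refine sum_congr rfl fun s _ => ?_
  ring

theorem sum_mul_evalAt_pow_add (f : AddMonoidAlgebra L (ℕ × ℕ)) (e : AddMonoidAlgebra F (ℕ × ℕ))
    (x y : L) (k : ℕ × ℕ) :
    ∑ m ∈ f.coeff.support, f.coeff m * evalAt e (x ^ (k.1 + m.1)) (y ^ (k.2 + m.2)) =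
      ∑ s ∈ e.coeff.support, algebraMap F L (e.coeff s) * x ^ (s.1 * k.1) * y ^ (s.2 * k.2) *
        evalAtL f (x ^ s.1) (y ^ s.2) := by
  simp only [evalAt_pow_add, evalAtL, mul_sum]
  rw [sum_comm]
  refine sum_congr rfl fun s _ => sum_congr rfl fun m _ => ?_
  ring

end SyndromeTable

theorem stmt_5_general {F L : Type*} [Field F] [Field L] [Algebra F L] (α₁ α₂ : L)
    (e : AddMonoidAlgebra F (ℕ × ℕ)) (τ : ℕ × ℕ) (U : ℕ × ℕ → L)
    (hU : ∀ n : ℕ × ℕ, U n = evalAt e (α₁ ^ (τ.1 + n.1)) (α₂ ^ (τ.2 + n.2)))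
    (f : AddMonoidAlgebra L (ℕ × ℕ)) (l : ℕ × ℕ) (n : ℕ × ℕ) (hn1 : l.1 ≤ n.1) (hn2 : l.2 ≤ n.2) :
    recEval U f l n =
      ∑ s ∈ e.coeff.support, algebraMap F L (e.coeff s) * α₁ ^ (s.1 * (n.1 - l.1 + τ.1)) *
        α₂ ^ (s.2 * (n.2 - l.2 + τ.2)) * evalAtL f (α₁ ^ s.1) (α₂ ^ s.2) := by
  have hU_shift : ∀ m : ℕ × ℕ, U (m + (n - l)) =
      evalAt e (α₁ ^ ((n - l + τ).1 + m.1)) (α₂ ^ ((n - l + τ).2 + m.2)) := fun m => by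
    rw [hU]
    congr 2 <;> simp only [Prod.fst_add, Prod.snd_add] <;> ring
  rw [recEval_of_le U f hn1 hn2]
  simp only [hU_shift]
  exact sum_mul_evalAt_pow_add f e α₁ α₂ (n - l + τ)

/-- for the syndrome table `U` afforded by `e` and `τ`, any nonzero `f`
with `LP f = l` and any `n` with `l ⪯ n` satisfy
`f[U]_n = Σ_{s∈supp(e)} e_s · α₁^{s₁(n₁−l₁+τ₁)} · α₂^{s₂(n₂−l₂+τ₂)} · f(α̅^s)`. -/
theorem stmt_5 (T : MonomialOrder2) {F L : Type*} [Field F] [Fintype F] [Field L]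
    [Algebra F L] (r₁ r₂ : ℕ) (hr₁ : 0 < r₁) (hr₂ : 0 < r₂)
    (hq : Nat.Coprime (r₁ * r₂) (Fintype.card F))
    (α₁ α₂ : L) (hα₁ : IsPrimitiveRoot α₁ r₁) (hα₂ : IsPrimitiveRoot α₂ r₂)
    (e : AddMonoidAlgebra F (ℕ × ℕ)) (he : ↑e.coeff.support ⊆ Ibox r₁ r₂)
    (τ : ℕ × ℕ) (hτ : τ ∈ Ibox r₁ r₂) (U : ℕ × ℕ → L)
    (hU : ∀ n : ℕ × ℕ, U n = evalAt e (α₁ ^ (τ.1 + n.1)) (α₂ ^ (τ.2 + n.2)))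
    (f : AddMonoidAlgebra L (ℕ × ℕ)) (hf : f ≠ 0) (l : ℕ × ℕ) (hl : IsLP T f l)
    (n : ℕ × ℕ) (hn1 : l.1 ≤ n.1) (hn2 : l.2 ≤ n.2) :
    recEval U f l n =
      ∑ s ∈ e.coeff.support, algebraMap F L (e.coeff s) * α₁ ^ (s.1 * (n.1 - l.1 + τ.1)) *
        α₂ ^ (s.2 * (n.2 - l.2 + τ.2)) * evalAtL f (α₁ ^ s.1) (α₂ ^ s.2) :=
  stmt_5_general α₁ α₂ e τ U hU f l n hn1 hn2
end

section
/- Let U be the syndrome table afforded by e and τ. For every nonzero polynomial f ∈ L[X₁,X₂] with supp(f) ⊆ I, the following are equivalent: (1) f(α̅^s) = 0 for all s ∈ supp(e); (2) Σ_{s∈supp(e)} e_s · α₁^{s₁n₁} · α₂^{s₂n₂} · f(α̅^s) = 0 for all n ∈ ℕ×ℕ with τ ⪯ n; (3) f[U]_n = 0 for all n ∈ ℕ×ℕ. -/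
/-!
Shifting the syndrome table by `k` turns `∑ₘ f_m u_{m+k}` into
`∑_{s ∈ supp e} e_s α̅^{s(τ+k)} f(α̅^s)`, so `f[U]_n` is the sum of condition (2) at the index
`τ + n - LP(f)`; as `n` ranges over `LP(f) ⪯ n` these indices cover all of `τ ⪯ n`.
For (2) ⇒ (1), the maps `k ↦ α̅^{sk}` for `s ∈ I` are distinct characters of `ℕ × ℕ`, hence
linearly independent (Dedekind), so every coefficient `e_s α̅^{sτ} f(α̅^s)` vanishes.
-/

theorem MonomialOrder2.exists_isLP (T : MonomialOrder2) {L : Type*} [Field L]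
    {f : AddMonoidAlgebra L (ℕ × ℕ)} (hf : f ≠ 0) : ∃ s, IsLP T f s := by
  classical
  suffices ∀ S : Finset (ℕ × ℕ), S.Nonempty → ∃ a ∈ S, ∀ b ∈ S, T.le b a from
    this _ (Finsupp.support_nonempty_iff.2 (AddMonoidAlgebra.coeff_eq_zero.not.2 hf))
  intro S hS
  induction hS using Finset.Nonempty.cons_induction with
  | singleton x => exact ⟨x, by simp, by simp [T.le_refl]⟩
  | cons x S hx _ ih =>
    obtain ⟨a, ha, hmax⟩ := ih
    rcases T.le_total x a with hxa | hax
    · exact ⟨a, by simp [ha], by simpa [hxa] using hmax⟩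
    · exact ⟨x, by simp, by simpa [T.le_refl] using fun b hb => T.le_trans _ _ _ (hmax b hb) hax⟩

theorem eq_zero_of_forall_sum_mul_pow_mul_pow_eq_zero {L ι : Type*} [Field L] {S : Finset ι}
    {x y : ι → L} (hxy : Set.InjOn (fun i => (x i, y i)) S) {c : ι → L}
    (h : ∀ n₁ n₂ : ℕ, ∑ i ∈ S, c i * x i ^ n₁ * y i ^ n₂ = 0) : ∀ i ∈ S, c i = 0 := by
  let χ : L × L → (Multiplicative ℕ × Multiplicative ℕ →* L) :=
    fun p => (powersHom L p.1).coprod (powersHom L p.2)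
  have hχ : Function.Injective χ := fun p q hpq =>
    Prod.ext (by simpa [χ] using DFunLike.congr_fun hpq (Multiplicative.ofAdd 1, 1))
      (by simpa [χ] using DFunLike.congr_fun hpq (1, Multiplicative.ofAdd 1))
  have hind : LinearIndepOn L (fun i => ⇑(χ (x i, y i))) (S : Set ι) :=
    (((linearIndependent_monoidHom _ L).linearIndepOn _).mono (Set.subset_univ _)).comp_of_image
      (hχ.comp_injOn hxy)
  refine linearIndepOn_finset_iff.1 hind c ?_
  ext ⟨a, b⟩
  simpa [χ, mul_assoc] using h a.toAdd b.toAdd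

theorem IsPrimitiveRoot.injOn_pow_Ibox {L : Type*} [Field L] {r₁ r₂ : ℕ} {α₁ α₂ : L}
    (hα₁ : IsPrimitiveRoot α₁ r₁) (hα₂ : IsPrimitiveRoot α₂ r₂) :
    Set.InjOn (fun s : ℕ × ℕ => (α₁ ^ s.1, α₂ ^ s.2)) (Ibox r₁ r₂) :=
  fun _ hs _ ht hst => Prod.ext (hα₁.pow_inj hs.1 ht.1 (congrArg Prod.fst hst))
    (hα₂.pow_inj hs.2 ht.2 (congrArg Prod.snd hst))

section Syndrome

variable {F L : Type*} [Field F] [Field L] [Algebra F L]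

noncomputable def syndromeSum (e : AddMonoidAlgebra F (ℕ × ℕ)) (α₁ α₂ : L)
    (f : AddMonoidAlgebra L (ℕ × ℕ)) (n : ℕ × ℕ) : L :=
  ∑ s ∈ e.coeff.support, algebraMap F L (e.coeff s) * α₁ ^ (s.1 * n.1) * α₂ ^ (s.2 * n.2) *
    evalAtL f (α₁ ^ s.1) (α₂ ^ s.2)

theorem sum_coeff_mul_shift_eq_syndromeSum {α₁ α₂ : L} {e : AddMonoidAlgebra F (ℕ × ℕ)}
    {τ : ℕ × ℕ} {U : ℕ × ℕ → L}
    (hU : ∀ n : ℕ × ℕ, U n = evalAt e (α₁ ^ (τ.1 + n.1)) (α₂ ^ (τ.2 + n.2)))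
    (f : AddMonoidAlgebra L (ℕ × ℕ)) (k : ℕ × ℕ) :
    ∑ m ∈ f.coeff.support, f.coeff m * U (m + k) = syndromeSum e α₁ α₂ f (τ + k) := by
  simp only [syndromeSum, evalAtL, hU, evalAt, Finset.mul_sum]
  rw [Finset.sum_comm]
  refine Finset.sum_congr rfl fun s _ => Finset.sum_congr rfl fun m _ => ?_
  simp only [Prod.fst_add, Prod.snd_add, ← pow_mul, pow_add]
  ring

theorem recEval_eq_syndromeSum {α₁ α₂ : L} {e : AddMonoidAlgebra F (ℕ × ℕ)}
    {τ : ℕ × ℕ} {U : ℕ × ℕ → L}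
    (hU : ∀ n : ℕ × ℕ, U n = evalAt e (α₁ ^ (τ.1 + n.1)) (α₂ ^ (τ.2 + n.2)))
    (f : AddMonoidAlgebra L (ℕ × ℕ)) {s n : ℕ × ℕ} (hsn : s ≤ n) :
    recEval U f s n = syndromeSum e α₁ α₂ f (τ + (n - s)) := by
  rw [recEval, if_pos (Prod.le_def.1 hsn), ← sum_coeff_mul_shift_eq_syndromeSum hU]
  refine Finset.sum_congr rfl fun m _ => ?_
  rw [add_tsub_assoc_of_le hsn]

theorem evalAtL_eq_zero_of_syndromeSum_eq_zero {r₁ r₂ : ℕ} {α₁ α₂ : L}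
    (hα₁ : IsPrimitiveRoot α₁ r₁) (hα₂ : IsPrimitiveRoot α₂ r₂)
    {e : AddMonoidAlgebra F (ℕ × ℕ)} (he : ↑e.coeff.support ⊆ Ibox r₁ r₂) (τ : ℕ × ℕ)
    {f : AddMonoidAlgebra L (ℕ × ℕ)} (h : ∀ k, syndromeSum e α₁ α₂ f (τ + k) = 0) :
    ∀ s ∈ e.coeff.support, evalAtL f (α₁ ^ s.1) (α₂ ^ s.2) = 0 := by
  intro s hs
  have hcoeff := eq_zero_of_forall_sum_mul_pow_mul_pow_eq_zero
    ((hα₁.injOn_pow_Ibox hα₂).mono he)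
    (c := fun s => algebraMap F L (e.coeff s) * α₁ ^ (s.1 * τ.1) * α₂ ^ (s.2 * τ.2) *
      evalAtL f (α₁ ^ s.1) (α₂ ^ s.2))
    (fun n₁ n₂ => by
      rw [← h (n₁, n₂)]
      refine Finset.sum_congr rfl fun t _ => ?_
      simp only [Prod.fst_add, Prod.snd_add, mul_add, pow_add, pow_mul]
      ring) s hs
  have hr₁ : r₁ ≠ 0 := Nat.ne_zero_of_lt (he hs).1
  have hr₂ : r₂ ≠ 0 := Nat.ne_zero_of_lt (he hs).2
  simpa [Finsupp.mem_support_iff.1 hs, hα₁.ne_zero hr₁, hα₂.ne_zero hr₂] using hcoeff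

end Syndrome

theorem stmt_6_general (T : MonomialOrder2) {F L : Type*} [Field F] [Field L]
    [Algebra F L] (r₁ r₂ : ℕ)
    (α₁ α₂ : L) (hα₁ : IsPrimitiveRoot α₁ r₁) (hα₂ : IsPrimitiveRoot α₂ r₂)
    (e : AddMonoidAlgebra F (ℕ × ℕ)) (he : ↑e.coeff.support ⊆ Ibox r₁ r₂)
    (τ : ℕ × ℕ) (U : ℕ × ℕ → L)
    (hU : ∀ n : ℕ × ℕ, U n = evalAt e (α₁ ^ (τ.1 + n.1)) (α₂ ^ (τ.2 + n.2)))
    (f : AddMonoidAlgebra L (ℕ × ℕ)) (hf : f ≠ 0) :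
    ((∀ s ∈ e.coeff.support, evalAtL f (α₁ ^ s.1) (α₂ ^ s.2) = 0) ↔
      (∀ n : ℕ × ℕ, τ.1 ≤ n.1 → τ.2 ≤ n.2 →
        ∑ s ∈ e.coeff.support, algebraMap F L (e.coeff s) * α₁ ^ (s.1 * n.1) * α₂ ^ (s.2 * n.2) *
          evalAtL f (α₁ ^ s.1) (α₂ ^ s.2) = 0)) ∧
    ((∀ n : ℕ × ℕ, τ.1 ≤ n.1 → τ.2 ≤ n.2 →
        ∑ s ∈ e.coeff.support, algebraMap F L (e.coeff s) * α₁ ^ (s.1 * n.1) * α₂ ^ (s.2 * n.2) *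
          evalAtL f (α₁ ^ s.1) (α₂ ^ s.2) = 0) ↔
      (∀ sf : ℕ × ℕ, IsLP T f sf → ∀ n : ℕ × ℕ, recEval U f sf n = 0)) := by
  refine ⟨⟨fun h1 n _ _ => ?_, fun h2 => ?_⟩, ⟨fun h2 sf _ n => ?_, fun h3 n hn₁ hn₂ => ?_⟩⟩
  · exact Finset.sum_eq_zero fun s hs => by rw [h1 s hs, mul_zero]
  · exact evalAtL_eq_zero_of_syndromeSum_eq_zero hα₁ hα₂ he τ
      fun k => h2 (τ + k) (Nat.le_add_right _ _) (Nat.le_add_right _ _)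
  · by_cases hsn : sf ≤ n
    · rw [recEval_eq_syndromeSum hU f hsn]
      exact h2 _ (Nat.le_add_right _ _) (Nat.le_add_right _ _)
    · rw [recEval, if_neg (mt Prod.le_def.2 hsn)]
  · obtain ⟨sf, hsf⟩ := T.exists_isLP hf
    have h := h3 sf hsf (sf + (n - τ))
    rwa [recEval_eq_syndromeSum hU f le_self_add, add_tsub_cancel_left,
      add_tsub_cancel_of_le (Prod.le_def.2 ⟨hn₁, hn₂⟩)] at h

/-- for the syndrome table `U` afforded by `e` and `τ`, and a nonzero
polynomial `f` with `supp f ⊆ I`, the conditions (1) `f(α̅^s) = 0` for all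
`s ∈ supp(e)`, (2) `Σ_{s∈supp(e)} e_s α₁^{s₁n₁} α₂^{s₂n₂} f(α̅^s) = 0` for all
`n ⪰ τ`, and (3) `f[U]_n = 0` for all `n`, are equivalent. -/
theorem stmt_6 (T : MonomialOrder2) {F L : Type*} [Field F] [Fintype F] [Field L]
    [Algebra F L] (r₁ r₂ : ℕ) (hr₁ : 0 < r₁) (hr₂ : 0 < r₂)
    (hq : Nat.Coprime (r₁ * r₂) (Fintype.card F))
    (α₁ α₂ : L) (hα₁ : IsPrimitiveRoot α₁ r₁) (hα₂ : IsPrimitiveRoot α₂ r₂)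
    (e : AddMonoidAlgebra F (ℕ × ℕ)) (he : ↑e.coeff.support ⊆ Ibox r₁ r₂)
    (τ : ℕ × ℕ) (hτ : τ ∈ Ibox r₁ r₂) (U : ℕ × ℕ → L)
    (hU : ∀ n : ℕ × ℕ, U n = evalAt e (α₁ ^ (τ.1 + n.1)) (α₂ ^ (τ.2 + n.2)))
    (f : AddMonoidAlgebra L (ℕ × ℕ)) (hf : f ≠ 0) (hfI : ↑f.coeff.support ⊆ Ibox r₁ r₂) :
    ((∀ s ∈ e.coeff.support, evalAtL f (α₁ ^ s.1) (α₂ ^ s.2) = 0) ↔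
      (∀ n : ℕ × ℕ, τ.1 ≤ n.1 → τ.2 ≤ n.2 →
        ∑ s ∈ e.coeff.support, algebraMap F L (e.coeff s) * α₁ ^ (s.1 * n.1) * α₂ ^ (s.2 * n.2) *
          evalAtL f (α₁ ^ s.1) (α₂ ^ s.2) = 0)) ∧
    ((∀ n : ℕ × ℕ, τ.1 ≤ n.1 → τ.2 ≤ n.2 →
        ∑ s ∈ e.coeff.support, algebraMap F L (e.coeff s) * α₁ ^ (s.1 * n.1) * α₂ ^ (s.2 * n.2) *
          evalAtL f (α₁ ^ s.1) (α₂ ^ s.2) = 0) ↔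
      (∀ sf : ℕ × ℕ, IsLP T f sf → ∀ n : ℕ × ℕ, recEval U f sf n = 0)) :=
  stmt_6_general T r₁ r₂ α₁ α₂ hα₁ hα₂ e he τ U hU f hf
end

section
/- Let L be a field, r₁, r₂ positive integers, α₁ ∈ L a primitive r₁-th root of unity, α₂ ∈ L a primitive r₂-th root of unity, and τ ∈ ℕ×ℕ. If e' ∈ L[X₁,X₂] has supp(e') ⊆ {0,…,r₁−1}×{0,…,r₂−1} and e'(α₁^{n₁}, α₂^{n₂}) = 0 for all n ∈ ℕ×ℕ with τ ⪯ n (componentwise), then e' = 0. -/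
/-!
The hypothesis is invariant under shifting `n` by multiples of `(r₁, r₂)`, so `e'` vanishes on
the whole grid `{α₁ⁱ} × {α₂ʲ}` of `r₁ × r₂` distinct points. Viewed as a polynomial in two
variables, `e'` has degree `< rₖ` in its `k`-th variable, so it is zero by the combinatorial
Nullstellensatz.
-/

open MvPolynomial Finset

noncomputable def pairExponent (m : ℕ × ℕ) : Fin 2 →₀ ℕ :=
  Finsupp.single 0 m.1 + Finsupp.single 1 m.2

@[simp] lemma pairExponent_apply_zero (m : ℕ × ℕ) : pairExponent m 0 = m.1 := by
  simp [pairExponent]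

@[simp] lemma pairExponent_apply_one (m : ℕ × ℕ) : pairExponent m 1 = m.2 := by
  simp [pairExponent]

lemma pairExponent_injective : Function.Injective pairExponent := fun m m' h =>
  Prod.ext (by simpa using congr($h 0)) (by simpa using congr($h 1))

section ToMvPolynomial

variable {R : Type*} [CommSemiring R]

noncomputable def toMvPolynomialFinTwo (f : AddMonoidAlgebra R (ℕ × ℕ)) :
    MvPolynomial (Fin 2) R :=
  AddMonoidAlgebra.mapDomain pairExponent f

lemma toMvPolynomialFinTwo_injective : Function.Injective (toMvPolynomialFinTwo (R := R)) :=
  AddMonoidAlgebra.mapDomain_injective pairExponent_injective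

@[simp] lemma toMvPolynomialFinTwo_zero :
    toMvPolynomialFinTwo (0 : AddMonoidAlgebra R (ℕ × ℕ)) = 0 :=
  AddMonoidAlgebra.mapDomain_zero _

lemma support_toMvPolynomialFinTwo (f : AddMonoidAlgebra R (ℕ × ℕ)) :
    (toMvPolynomialFinTwo f).support = f.coeff.support.image pairExponent := by
  classical
  exact Finsupp.mapDomain_support_of_injective pairExponent_injective _

lemma coeff_toMvPolynomialFinTwo (f : AddMonoidAlgebra R (ℕ × ℕ)) (m : ℕ × ℕ) :
    (toMvPolynomialFinTwo f).coeff (pairExponent m) = f.coeff m :=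
  Finsupp.mapDomain_apply pairExponent_injective _ _

lemma degreeOf_toMvPolynomialFinTwo_lt {f : AddMonoidAlgebra R (ℕ × ℕ)} {d : Fin 2 → ℕ}
    (hd : ∀ i, 0 < d i) (hf : ∀ m ∈ f.coeff.support, ∀ i, pairExponent m i < d i)
    (i : Fin 2) :
    (toMvPolynomialFinTwo f).degreeOf i < d i := by
  rw [degreeOf_lt_iff (hd i), support_toMvPolynomialFinTwo]
  simp only [mem_image, forall_exists_index, and_imp]
  rintro _ m hm rfl
  exact hf m hm i

end ToMvPolynomial

section Field

variable {L : Type*} [Field L]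

lemma eval_toMvPolynomialFinTwo (f : AddMonoidAlgebra L (ℕ × ℕ)) (x y : L) :
    eval ![x, y] (toMvPolynomialFinTwo f) = evalAtL f x y := by
  rw [eval_eq', support_toMvPolynomialFinTwo, sum_image pairExponent_injective.injOn]
  simp [coeff_toMvPolynomialFinTwo, evalAtL, mul_assoc]

theorem eq_zero_of_evalAtL_eq_zero_on_prod {f : AddMonoidAlgebra L (ℕ × ℕ)}
    {S₁ S₂ : Finset L}
    (hsupp : ↑f.coeff.support ⊆ Ibox (#S₁) (#S₂))
    (hvan : ∀ x ∈ S₁, ∀ y ∈ S₂, evalAtL f x y = 0) : f = 0 := by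
  by_contra hf
  obtain ⟨m, hm⟩ := Finsupp.support_nonempty_iff.mpr (mt AddMonoidAlgebra.coeff_eq_zero.mp hf)
  have hpos : 0 < #S₁ ∧ 0 < #S₂ := by
    obtain ⟨h₁, h₂⟩ := hsupp hm
    omega
  refine hf (toMvPolynomialFinTwo_injective ?_)
  rw [toMvPolynomialFinTwo_zero]
  refine eq_zero_of_eval_zero_at_prod_finset _ ![S₁, S₂] ?_ fun x hx => ?_
  · refine degreeOf_toMvPolynomialFinTwo_lt (d := fun i => #(![S₁, S₂] i)) ?_ ?_
    · intro i; fin_cases i <;> simp [hpos]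
    · intro m hm i
      obtain ⟨h₁, h₂⟩ := hsupp hm
      fin_cases i <;> simpa
  · have hx' : x = ![x 0, x 1] := by ext i; fin_cases i <;> rfl
    rw [hx', eval_toMvPolynomialFinTwo]
    exact hvan _ (hx 0) _ (hx 1)

end Field

lemma IsPrimitiveRoot.card_image_pow_range {M : Type*} [CommMonoid M] [DecidableEq M] {α : M}
    {r : ℕ} (hα : IsPrimitiveRoot α r) : #((range r).image (α ^ ·)) = r := by
  rw [card_image_of_injOn fun i hi j hj h => hα.pow_inj (mem_range.1 hi) (mem_range.1 hj) h,
    card_range]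

lemma IsPrimitiveRoot.pow_add_mul {M : Type*} [CommMonoid M] {α : M} {r : ℕ}
    (hα : IsPrimitiveRoot α r) (i N : ℕ) : α ^ (i + r * N) = α ^ i := by
  rw [pow_add, pow_mul, hα.pow_eq_one, one_pow, mul_one]

theorem stmt_7_general {L : Type*} [Field L] (r₁ r₂ : ℕ)
    (α₁ α₂ : L) (hα₁ : IsPrimitiveRoot α₁ r₁) (hα₂ : IsPrimitiveRoot α₂ r₂)
    (τ : ℕ × ℕ) (e' : AddMonoidAlgebra L (ℕ × ℕ)) (hsupp : ↑e'.coeff.support ⊆ Ibox r₁ r₂)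
    (hvan : ∀ n : ℕ × ℕ, τ.1 ≤ n.1 → τ.2 ≤ n.2 →
      evalAtL e' (α₁ ^ n.1) (α₂ ^ n.2) = 0) :
    e' = 0 := by
  classical
  refine eq_zero_of_evalAtL_eq_zero_on_prod (S₁ := (range r₁).image (α₁ ^ ·))
    (S₂ := (range r₂).image (α₂ ^ ·)) ?_ ?_
  · rwa [hα₁.card_image_pow_range, hα₂.card_image_pow_range]
  simp only [mem_image, mem_range]
  rintro _ ⟨i, hi, rfl⟩ _ ⟨j, hj, rfl⟩
  rw [← hα₁.pow_add_mul i τ.1, ← hα₂.pow_add_mul j τ.2]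
  exact hvan (i + r₁ * τ.1, j + r₂ * τ.2)
    (le_add_left (Nat.le_mul_of_pos_left τ.1 (by omega)))
    (le_add_left (Nat.le_mul_of_pos_left τ.2 (by omega)))

/-- a polynomial supported in `{0,…,r₁−1}×{0,…,r₂−1}` vanishing at all
points `(α₁^{n₁}, α₂^{n₂})` with `τ ⪯ n` is zero. -/
theorem stmt_7 {L : Type*} [Field L] (r₁ r₂ : ℕ) (hr₁ : 0 < r₁) (hr₂ : 0 < r₂)
    (α₁ α₂ : L) (hα₁ : IsPrimitiveRoot α₁ r₁) (hα₂ : IsPrimitiveRoot α₂ r₂)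
    (τ : ℕ × ℕ) (e' : AddMonoidAlgebra L (ℕ × ℕ)) (hsupp : ↑e'.coeff.support ⊆ Ibox r₁ r₂)
    (hvan : ∀ n : ℕ × ℕ, τ.1 ≤ n.1 → τ.2 ≤ n.2 →
      evalAtL e' (α₁ ^ n.1) (α₂ ^ n.2) = 0) :
    e' = 0 :=
  stmt_7_general r₁ r₂ α₁ α₂ hα₁ hα₂ τ e' hsupp hvan
end

section
/- Let t ≥ 1 be an integer, let s^(1),…,s^(d) be a sequence of defining points with associated delta-set Δ, and suppose |Δ| ≤ t. Then (1) for all a, b ∈ Δ, a + b ∈ 𝒮(t); and (2) for all i ∈ {1,…,d} and all a ∈ Δ, s^(i) + a ∈ 𝒮(t). -/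
open Finset

lemma add_lt_card_Iic (p : ℕ × ℕ) : p.1 + p.2 < #(Iic p) := by
  rw [card_Iic_prod, Nat.card_Iic, Nat.card_Iic]
  nlinarith

lemma add_le_card_Iio (p : ℕ × ℕ) : p.1 + p.2 ≤ #(Iio p) := by
  rw [card_Iio_eq_card_Iic_sub_one]
  have := add_lt_card_Iic p
  omega

lemma add_le_card_Iio_union_Iic_of_fst_lt {p q : ℕ × ℕ} (hqp : q.1 < p.1)
    (h2 : 1 ≤ p.2 + q.2) : p.1 + p.2 + (q.1 + q.2) ≤ #(Iio p ∪ Iic q) := by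
  set M := max p.2 q.2
  -- Three disjoint pieces: the bottom row left of `p`, the column below `p`, and the block of
  -- height `M` above the bottom row over the columns `≤ q.1`.
  have hsub : (range p.1 ×ˢ {0} ∪ {p.1} ×ˢ range p.2) ∪ range (q.1 + 1) ×ˢ Icc 1 M ⊆
      Iio p ∪ Iic q := by
    intro m hm
    simp only [mem_union, mem_product, mem_range, mem_singleton, mem_Icc] at hm
    simp only [mem_union, mem_Iio, mem_Iic, Prod.lt_iff, Prod.le_def]
    omega
  have hdisj₁ : Disjoint (range p.1 ×ˢ {0}) ({p.1} ×ˢ range p.2) := by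
    simp only [disjoint_left, mem_product, mem_range, mem_singleton]
    omega
  have hdisj₂ :
      Disjoint (range p.1 ×ˢ {0} ∪ {p.1} ×ˢ range p.2) (range (q.1 + 1) ×ˢ Icc 1 M) := by
    simp only [disjoint_left, mem_union, mem_product, mem_range, mem_singleton, mem_Icc]
    omega
  have hM : q.1 + q.2 ≤ (q.1 + 1) * M := by
    have : 1 ≤ M := by omega
    have : q.2 ≤ M := le_max_right _ _
    nlinarith
  calc p.1 + p.2 + (q.1 + q.2) ≤ p.1 + p.2 + (q.1 + 1) * M := by omega
    _ = #((range p.1 ×ˢ {0} ∪ {p.1} ×ˢ range p.2) ∪ range (q.1 + 1) ×ˢ Icc 1 M) := by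
      rw [card_union_of_disjoint hdisj₂, card_union_of_disjoint hdisj₁]
      simp
    _ ≤ #(Iio p ∪ Iic q) := card_le_card hsub

lemma card_Iio_union_Iic_swap (p q : ℕ × ℕ) :
    #(Iio p.swap ∪ Iic q.swap) = #(Iio p ∪ Iic q) := by
  refine card_nbij' Prod.swap Prod.swap ?_ ?_ (fun _ _ ↦ rfl) (fun _ _ ↦ rfl) <;>
  · intro m
    simp only [coe_union, Set.mem_union, mem_coe, mem_Iio, mem_Iic, Prod.lt_iff, Prod.le_def,
      Prod.fst_swap, Prod.snd_swap]
    tauto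

lemma add_le_card_Iio_union_Iic {p q : ℕ × ℕ} (hpq : ¬ p < q) (h1 : 1 ≤ p.1 + q.1)
    (h2 : 1 ≤ p.2 + q.2) : p.1 + p.2 + (q.1 + q.2) ≤ #(Iio p ∪ Iic q) := by
  obtain rfl | hne := eq_or_ne p q
  · have : 1 ≤ p.1 := by omega
    have : 1 ≤ p.2 := by omega
    rw [union_eq_right.mpr Iio_subset_Iic_self, card_Iic_prod, Nat.card_Iic, Nat.card_Iic]
    nlinarith
  have hle : ¬ p ≤ q := fun h ↦ hpq (h.lt_of_ne hne)
  rw [Prod.le_def, not_and_or, not_le, not_le] at hle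
  rcases hle with hqp | hqp
  · exact add_le_card_Iio_union_Iic_of_fst_lt hqp h2
  · rw [← card_Iio_union_Iic_swap]
    have := add_le_card_Iio_union_Iic_of_fst_lt (p := p.swap) (q := q.swap) hqp h1
    simp only [Prod.fst_swap, Prod.snd_swap] at this
    omega

lemma card_le_ncard_of_coe_subset {α : Type*} {S : Finset α} {T : Set α} (hT : T.Finite)
    (h : (S : Set α) ⊆ T) : #S ≤ T.ncard := by
  simpa using Set.ncard_le_ncard h hT

section LowerSet

variable {Δ : Set (ℕ × ℕ)}

lemma add_le_ncard_of_Iio_subset (hΔ : Δ.Finite) {p : ℕ × ℕ} (hp : Set.Iio p ⊆ Δ) :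
    p.1 + p.2 ≤ Δ.ncard :=
  (add_le_card_Iio p).trans (card_le_ncard_of_coe_subset hΔ (by simpa using hp))

lemma IsLowerSet.add_lt_ncard (hΔl : IsLowerSet Δ) (hΔ : Δ.Finite) {a : ℕ × ℕ} (ha : a ∈ Δ) :
    a.1 + a.2 < Δ.ncard :=
  (add_lt_card_Iic a).trans_le
    (card_le_ncard_of_coe_subset hΔ (by simpa using hΔl.Iic_subset ha))

lemma IsLowerSet.add_le_ncard (hΔl : IsLowerSet Δ) (hΔ : Δ.Finite) {p q : ℕ × ℕ}
    (hp : Set.Iio p ⊆ Δ) (hq : q ∈ Δ) (hpq : ¬ p < q) (h1 : 1 ≤ p.1 + q.1)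
    (h2 : 1 ≤ p.2 + q.2) : p.1 + p.2 + (q.1 + q.2) ≤ Δ.ncard := by
  refine (add_le_card_Iio_union_Iic hpq h1 h2).trans (card_le_ncard_of_coe_subset hΔ ?_)
  rw [coe_union, coe_Iio, coe_Iic]
  exact Set.union_subset hp (hΔl.Iic_subset hq)

end LowerSet

lemma isLowerSet_deltaSet (d : ℕ) (s : ℕ → ℕ × ℕ) : IsLowerSet (deltaSet d s) := by
  rintro a m ⟨hm₁, hm₂⟩ ⟨i, hi, ha₁, ha₂⟩
  exact ⟨i, hi, by omega, by omega⟩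

lemma deltaSet_finite (d : ℕ) (s : ℕ → ℕ × ℕ) : (deltaSet d s).Finite := by
  refine ((finite_toSet (range d)).biUnion fun i _ ↦
    (Set.finite_Iio (s i).1).prod (Set.finite_Iio (s (i + 1)).2)).subset ?_
  rintro m ⟨i, hi, hm₁, hm₂⟩
  simp only [Set.mem_iUnion, mem_coe, mem_range, Set.mem_prod, Set.mem_Iio]
  exact ⟨i, by omega, by omega, by omega⟩

section DefPoints

variable {d : ℕ} {s : ℕ → ℕ × ℕ}

lemma IsDefPoints.Iio_subset_deltaSet (hs : IsDefPoints d s) {i : ℕ} (hi : i < d) :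
    Set.Iio (s i) ⊆ deltaSet d s := by
  obtain ⟨-, hfst, hsnd, hlast, hfirst⟩ := hs
  intro m hm
  rcases Prod.lt_iff.mp hm with ⟨hm₁, hm₂⟩ | ⟨hm₁, hm₂⟩
  · have hi' : i + 1 < d := by
      by_contra! h
      rw [show i = d - 1 by omega] at hm₁
      omega
    exact ⟨i, hi', hm₁, by have := hsnd i (i + 1) i.lt_succ_self hi'; omega⟩
  · obtain ⟨j, rfl⟩ := Nat.exists_eq_add_one_of_ne_zero (by rintro rfl; omega : i ≠ 0)
    exact ⟨j, hi, by have := hfst j (j + 1) j.lt_succ_self hi; omega, hm₂⟩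

lemma IsDefPoints.notMem_deltaSet (hs : IsDefPoints d s) {i : ℕ} (hi : i < d) :
    s i ∉ deltaSet d s := by
  obtain ⟨-, hfst, hsnd, -, -⟩ := hs
  rintro ⟨j, hj, h₁, h₂⟩
  rcases lt_trichotomy i j with hij | rfl | hij
  · have := hfst i j hij (by omega); omega
  · omega
  · rcases Nat.lt_or_eq_of_le (show j + 1 ≤ i by omega) with hij' | rfl
    · have := hsnd (j + 1) i hij' hi; omega
    · omega

lemma IsDefPoints.not_lt_of_mem_deltaSet (hs : IsDefPoints d s) {i : ℕ} (hi : i < d)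
    {a : ℕ × ℕ} (ha : a ∈ deltaSet d s) : ¬ s i < a :=
  fun h ↦ hs.notMem_deltaSet hi (isLowerSet_deltaSet d s h.le ha)

end DefPoints

lemma add_mem_Sset {t : ℕ} {u v : ℕ × ℕ} (hu : u.1 + u.2 ≤ t) (hv : v.1 + v.2 < t)
    (huv : 1 ≤ u.1 + v.1 → 1 ≤ u.2 + v.2 → u.1 + u.2 + (v.1 + v.2) ≤ t) : u + v ∈ Sset t := by
  simp only [Sset, Set.mem_ofPred_eq, Prod.fst_add, Prod.snd_add]
  omega

theorem stmt_13_general (t d : ℕ) (s : ℕ → ℕ × ℕ) (hs : IsDefPoints d s)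
    (hcard : (deltaSet d s).ncard ≤ t) :
    (∀ a ∈ deltaSet d s, ∀ b ∈ deltaSet d s, a + b ∈ Sset t) ∧
      (∀ i, i < d → ∀ a ∈ deltaSet d s, s i + a ∈ Sset t) := by
  have hfin := deltaSet_finite d s
  have hlow := isLowerSet_deltaSet d s
  have hmem : ∀ {a}, a ∈ deltaSet d s → a.1 + a.2 < t :=
    fun ha ↦ (hlow.add_lt_ncard hfin ha).trans_le hcard
  refine ⟨fun a ha b hb ↦ add_mem_Sset (hmem ha).le (hmem hb) fun h₁ h₂ ↦ ?_,
    fun i hi a ha ↦ ?_⟩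
  · by_cases hab : a < b
    · have := hlow.add_le_ncard hfin (hlow.Iio_subset hb) ha hab.not_gt (by omega) (by omega)
      omega
    · exact (hlow.add_le_ncard hfin (hlow.Iio_subset ha) hb hab h₁ h₂).trans hcard
  · have hIio := hs.Iio_subset_deltaSet hi
    refine add_mem_Sset ((add_le_ncard_of_Iio_subset hfin hIio).trans hcard) (hmem ha)
      fun h₁ h₂ ↦ ?_
    exact (hlow.add_le_ncard hfin hIio ha (hs.not_lt_of_mem_deltaSet hi ha) h₁ h₂).trans hcard

/-- if `Δ` is a delta-set with defining points `s^(1),…,s^(d)` and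
`|Δ| ≤ t`, then `Δ + Δ ⊆ 𝒮(t)` and `{s^(i)} + Δ ⊆ 𝒮(t)`. -/
theorem stmt_13 (t d : ℕ) (ht : 1 ≤ t) (s : ℕ → ℕ × ℕ) (hs : IsDefPoints d s)
    (hcard : (deltaSet d s).ncard ≤ t) :
    (∀ a ∈ deltaSet d s, ∀ b ∈ deltaSet d s, a + b ∈ Sset t) ∧
      (∀ i, i < d → ∀ a ∈ deltaSet d s, s i + a ∈ Sset t) :=
  stmt_13_general t d s hs hcard
end
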